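/- Let S be a set of n red/blue points in the plane with distinct x and y coordinates, and let h ≥ 2 be the number of points participating in S. Then the structural entropy satisfies n·(H(S)+1) ≤ C·n·log h for an absolute constant C, i.e., n(H(S)+1) ∈ O(n log h). -/

import Mathlib

open Classical

noncomputable section

abbrev Pt := ℝ × ℝ

/-- An axis-aligned box in the plane. -/
structure Box where
  x0 : ℝ
  x1 : ℝ
  y0 : ℝ
  y1 : ℝ
  hx : x0 < x1
  hy : y0 < y1

/-- The cross of a box: the union of its vertical and horizontal strips. -/
def Box.cross (B : Box) : Set Pt :=
  {p | (B.x0 ≤ p.1 ∧ p.1 ≤ B.x1) ∨ (B.y0 ≤ p.2 ∧ p.2 ≤ B.y1)}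

/-- The four open quadrants of a box. -/
def Box.NE (B : Box) : Set Pt := {p | B.x1 < p.1 ∧ B.y1 < p.2}
def Box.NW (B : Box) : Set Pt := {p | p.1 < B.x0 ∧ B.y1 < p.2}
def Box.SE (B : Box) : Set Pt := {p | B.x1 < p.1 ∧ p.2 < B.y0}
def Box.SW (B : Box) : Set Pt := {p | p.1 < B.x0 ∧ p.2 < B.y0}

/-- Membership in the open interior of a box. -/
def Box.inside (B : Box) (p : Pt) : Prop :=
  B.x0 < p.1 ∧ p.1 < B.x1 ∧ B.y0 < p.2 ∧ p.2 < B.y1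

/-- Membership in the closed box. -/
def Box.memClosed (B : Box) (p : Pt) : Prop :=
  B.x0 ≤ p.1 ∧ p.1 ≤ B.x1 ∧ B.y0 ≤ p.2 ∧ p.2 ≤ B.y1

/-- `p` avoids the boundary lines of the box and of its quadrants. -/
def Box.offBoundary (B : Box) (p : Pt) : Prop :=
  p.1 ≠ B.x0 ∧ p.1 ≠ B.x1 ∧ p.2 ≠ B.y0 ∧ p.2 ≠ B.y1

/-- Minimal points of `T` towards the SW corner of the NE quadrant
(the usual minimal points under coordinatewise domination). -/
def neMinSet (T : Set Pt) : Set Pt :=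
  {p ∈ T | ∀ q ∈ T, (q.1 ≤ p.1 ∧ q.2 ≤ p.2) → q = p}

/-- Minimal points of `T` towards the SE corner of the NW quadrant. -/
def nwMinSet (T : Set Pt) : Set Pt :=
  {p ∈ T | ∀ q ∈ T, (p.1 ≤ q.1 ∧ q.2 ≤ p.2) → q = p}

/-- Minimal points of `T` towards the NW corner of the SE quadrant. -/
def seMinSet (T : Set Pt) : Set Pt :=
  {p ∈ T | ∀ q ∈ T, (q.1 ≤ p.1 ∧ p.2 ≤ q.2) → q = p}

/-- Minimal points of `T` towards the NE corner of the SW quadrant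
(the usual maximal points under coordinatewise domination). -/
def swMinSet (T : Set Pt) : Set Pt :=
  {p ∈ T | ∀ q ∈ T, (p.1 ≤ q.1 ∧ p.2 ≤ q.2) → q = p}

/-- `z` lies in the open axis-aligned rectangle spanned by `p` and `q`. -/
def openRect (p q z : Pt) : Prop :=
  min p.1 q.1 < z.1 ∧ z.1 < max p.1 q.1 ∧ min p.2 q.2 < z.2 ∧ z.2 < max p.2 q.2

/-- `p` and `q` see each other in `S`: the open rectangle they span is empty of `S`. -/
def sees (S : Set Pt) (p q : Pt) : Prop := ∀ z ∈ S, ¬ openRect p q z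

/-- `p` participates in `S`: some point of the opposite color sees `p`. -/
def participates (S : Set Pt) (color : Pt → Bool) (p : Pt) : Prop :=
  ∃ q ∈ S, color q ≠ color p ∧ sees S p q

/-- All points of `S` in the cross of `B` have color `c`. -/
def crossSafeFor (S : Set Pt) (color : Pt → Bool) (c : Bool) (B : Box) : Prop :=
  ∀ p ∈ S, p ∈ B.cross → color p = c

/-- `B` is `c`-safe for `S`: `c`-cross-safe and the four directional minimal
sets of the quadrants only contain points of color `c`. -/
def safeFor (S : Set Pt) (color : Pt → Bool) (c : Bool) (B : Box) : Prop :=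
  crossSafeFor S color c B ∧
  (∀ p ∈ neMinSet (S ∩ B.NE), color p = c) ∧
  (∀ p ∈ nwMinSet (S ∩ B.NW), color p = c) ∧
  (∀ p ∈ seMinSet (S ∩ B.SE), color p = c) ∧
  (∀ p ∈ swMinSet (S ∩ B.SW), color p = c)

/-- `B` is safe: red-safe (`true`) or blue-safe (`false`). -/
def isSafe (S : Set Pt) (color : Pt → Bool) (B : Box) : Prop :=
  safeFor S color true B ∨ safeFor S color false B

/-- General position: pairwise distinct x-coordinates and y-coordinates. -/
def genPos (S : Set Pt) : Prop :=
  ∀ p ∈ S, ∀ q ∈ S, p ≠ q → p.1 ≠ q.1 ∧ p.2 ≠ q.2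

/-- `Prt` is a partition of the finite point set `S`. -/
def isPartition (S : Finset Pt) (Prt : Finset (Finset Pt)) : Prop :=
  (∀ C ∈ Prt, C ⊆ S ∧ C.Nonempty) ∧ (∀ p ∈ S, ∃! C, C ∈ Prt ∧ p ∈ C)

/-- A respectful partition: every part is a singleton or enclosed in a safe box. -/
def respectful (S : Finset Pt) (color : Pt → Bool) (Prt : Finset (Finset Pt)) : Prop :=
  ∀ C ∈ Prt, C.card = 1 ∨
    ∃ B : Box, (∀ q ∈ S, B.offBoundary q) ∧ isSafe (↑S) color B ∧ ∀ q ∈ C, B.inside q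

/-- Entropy of a partition of an `n`-point set (logarithms base 2). -/
def partitionEntropy (n : ℕ) (Prt : Finset (Finset Pt)) : ℝ :=
  ∑ C ∈ Prt, ((C.card : ℝ) / n) * Real.logb 2 ((n : ℝ) / (C.card : ℝ))

/-- Structural entropy: infimum of entropies of respectful partitions. -/
def structEntropy (S : Finset Pt) (color : Pt → Bool) : ℝ :=
  sInf {x : ℝ | ∃ Prt : Finset (Finset Pt),
    isPartition S Prt ∧ respectful S color Prt ∧ x = partitionEntropy S.card Prt}

/-!
Cut the plane along the vertical and horizontal lines through the `h` participating points. Keep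
every participating point as a singleton and group the other points by the grid cell containing
them: there are at most `h + (h + 1)²` parts, so by Jensen the partition has entropy at most
`log (h + (h + 1)²) ≤ 4 log h`.

The partition is respectful because a slightly enlarged box around a cell is safe. Its cross
contains no participating point, whereas a bichromatic set of points that is closed under spanning
rectangles contains a pair of opposite colours seeing each other (a closest such pair), and both of
them participate. Applied to the strips of the cross, and to the rectangle between the cell and a
directional minimum of a quadrant, this forces all these points to have the colour of the cell.
-/

open Finset

namespace StructuralEntropy

lemma openRect_comm {p q z : Pt} : openRect p q z ↔ openRect q p z := by
  simp only [openRect, min_comm p.1, max_comm p.1, min_comm p.2, max_comm p.2]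

lemma sees_comm {S : Set Pt} {p q : Pt} (h : sees S p q) : sees S q p :=
  fun z hz hr => h z hz (openRect_comm.mpr hr)

lemma abs_sub_lt_of_between {a b c : ℝ} (h₁ : min a b < c) (h₂ : c < max a b) :
    |a - c| < |a - b| ∧ |c - b| < |a - b| := by
  rcases le_total a b with h | h
  · rw [min_eq_left h] at h₁
    rw [max_eq_right h] at h₂
    rw [abs_of_neg (by linarith), abs_of_neg (by linarith), abs_of_nonpos (by linarith)]
    constructor <;> linarith
  · rw [min_eq_right h] at h₁
    rw [max_eq_left h] at h₂
    rw [abs_of_pos (by linarith), abs_of_pos (by linarith), abs_of_nonneg (by linarith)]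
    constructor <;> linarith

lemma mem_prod_of_openRect {s t : Set ℝ} [s.OrdConnected] [t.OrdConnected] {u v z : Pt}
    (hu : u ∈ s ×ˢ t) (hv : v ∈ s ×ˢ t) (hz : openRect u v z) : z ∈ s ×ˢ t :=
  ⟨Set.OrdConnected.uIcc_subset ‹_› hu.1 hv.1 ⟨hz.1.le, hz.2.1.le⟩,
    Set.OrdConnected.uIcc_subset ‹_› hu.2 hv.2 ⟨hz.2.2.1.le, hz.2.2.2.le⟩⟩

/-- A bichromatic pair at minimal `ℓ¹`-distance sees: a point in between is closer to both and has
the opposite colour of one of them. -/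
lemma exists_sees_of_color_ne {S : Finset Pt} {color : Pt → Bool} {s t : Set ℝ}
    [s.OrdConnected] [t.OrdConnected] {a b : Pt} (ha : a ∈ S) (hb : b ∈ S)
    (has : a ∈ s ×ˢ t) (hbs : b ∈ s ×ˢ t) (hab : color a ≠ color b) :
    ∃ u ∈ S, ∃ v ∈ S, u ∈ s ×ˢ t ∧ v ∈ s ×ˢ t ∧ color u ≠ color v ∧ sees ↑S u v := by
  set T := S.filter (· ∈ s ×ˢ t)
  set pairs := (T ×ˢ T).filter fun uv => color uv.1 ≠ color uv.2
  have hpairs : (a, b) ∈ pairs :=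
    mem_filter.mpr ⟨mem_product.mpr ⟨mem_filter.mpr ⟨ha, has⟩, mem_filter.mpr ⟨hb, hbs⟩⟩, hab⟩
  obtain ⟨⟨u, v⟩, huv, hmin⟩ :=
    pairs.exists_min_image (fun uv => |uv.1.1 - uv.2.1| + |uv.1.2 - uv.2.2|) ⟨_, hpairs⟩
  simp only [pairs, T, mem_filter, mem_product] at huv hmin
  obtain ⟨⟨⟨hu, hus⟩, hv, hvs⟩, hcol⟩ := huv
  refine ⟨u, hu, v, hv, hus, hvs, hcol, fun z hz hr => ?_⟩
  have hzs := mem_prod_of_openRect hus hvs hr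
  have h₁ := abs_sub_lt_of_between hr.1 hr.2.1
  have h₂ := abs_sub_lt_of_between hr.2.2.1 hr.2.2.2
  by_cases hzu : color z = color u
  · have := hmin (z, v) ⟨⟨⟨hz, hzs⟩, hv, hvs⟩, hzu ▸ hcol⟩
    linarith
  · have := hmin (u, z) ⟨⟨⟨hu, hus⟩, hz, hzs⟩, Ne.symm hzu⟩
    linarith

section SafeBox

variable {S : Finset Pt} {color : Pt → Bool} {B : Box}

lemma color_eq_of_forall_ne_mem_cross (hP : ∀ q ∈ S, participates ↑S color q → q ∉ B.cross)
    {s t : Set ℝ} [s.OrdConnected] [t.OrdConnected] {p w : Pt} (hp : p ∈ S) (hw : w ∈ S)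
    (hps : p ∈ s ×ˢ t) (hws : w ∈ s ×ˢ t)
    (hcross : ∀ z ∈ S, z ∈ s ×ˢ t → z ≠ p → z ∈ B.cross) : color p = color w := by
  by_contra hne
  obtain ⟨u, hu, v, hv, hus, hvs, huv, hsee⟩ := exists_sees_of_color_ne hp hw hps hws hne
  by_cases hup : u = p
  · subst hup
    exact hP v hv ⟨u, hu, huv, sees_comm hsee⟩
      (hcross v hv hvs fun h => huv (congrArg color h.symm))
  · exact hP u hu ⟨v, hv, huv.symm, hsee⟩ (hcross u hu hus hup)

variable (hP : ∀ q ∈ S, participates ↑S color q → q ∉ B.cross)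
  {w : Pt} (hw : w ∈ S) (hwB : B.inside w)
include hP hw hwB

lemma color_eq_of_mem_cross {p : Pt} (hp : p ∈ S) (hpB : p ∈ B.cross) : color p = color w := by
  obtain ⟨hw₀, hw₁, hw₂, hw₃⟩ := hwB
  rcases hpB with hpx | hpy
  · exact color_eq_of_forall_ne_mem_cross (s := Set.Icc B.x0 B.x1) (t := Set.univ) hP hp hw
      ⟨hpx, trivial⟩ ⟨⟨hw₀.le, hw₁.le⟩, trivial⟩ fun z _ hz _ => Or.inl hz.1
  · exact color_eq_of_forall_ne_mem_cross (s := Set.univ) (t := Set.Icc B.y0 B.y1) hP hp hw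
      ⟨trivial, hpy⟩ ⟨trivial, ⟨hw₂.le, hw₃.le⟩⟩ fun z _ hz _ => Or.inr hz.2

lemma color_eq_of_mem_neMinSet {p : Pt} (hp : p ∈ neMinSet (↑S ∩ B.NE)) :
    color p = color w := by
  obtain ⟨⟨hpS, hpx, hpy⟩, hmin⟩ := hp
  obtain ⟨hw₀, hw₁, hw₂, hw₃⟩ := hwB
  refine color_eq_of_forall_ne_mem_cross (s := Set.Ioc B.x0 p.1) (t := Set.Ioc B.y0 p.2) hP
    hpS hw ⟨⟨by linarith [B.hx], le_rfl⟩, by linarith [B.hy], le_rfl⟩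
    ⟨⟨hw₀, by linarith⟩, hw₂, by linarith⟩ fun z hz ⟨⟨hz₀, hz₁⟩, hz₂, hz₃⟩ hzp => ?_
  by_contra hzB
  refine hzp (hmin z ⟨hz, ?_, ?_⟩ ⟨hz₁, hz₃⟩)
  · exact lt_of_not_ge fun h => hzB (Or.inl ⟨hz₀.le, h⟩)
  · exact lt_of_not_ge fun h => hzB (Or.inr ⟨hz₂.le, h⟩)

lemma color_eq_of_mem_nwMinSet {p : Pt} (hp : p ∈ nwMinSet (↑S ∩ B.NW)) :
    color p = color w := by
  obtain ⟨⟨hpS, hpx, hpy⟩, hmin⟩ := hp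
  obtain ⟨hw₀, hw₁, hw₂, hw₃⟩ := hwB
  refine color_eq_of_forall_ne_mem_cross (s := Set.Ico p.1 B.x1) (t := Set.Ioc B.y0 p.2) hP
    hpS hw ⟨⟨le_rfl, by linarith [B.hx]⟩, by linarith [B.hy], le_rfl⟩
    ⟨⟨by linarith, hw₁⟩, hw₂, by linarith⟩ fun z hz ⟨⟨hz₀, hz₁⟩, hz₂, hz₃⟩ hzp => ?_
  by_contra hzB
  refine hzp (hmin z ⟨hz, ?_, ?_⟩ ⟨hz₀, hz₃⟩)
  · exact lt_of_not_ge fun h => hzB (Or.inl ⟨h, hz₁.le⟩)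
  · exact lt_of_not_ge fun h => hzB (Or.inr ⟨hz₂.le, h⟩)

lemma color_eq_of_mem_seMinSet {p : Pt} (hp : p ∈ seMinSet (↑S ∩ B.SE)) :
    color p = color w := by
  obtain ⟨⟨hpS, hpx, hpy⟩, hmin⟩ := hp
  obtain ⟨hw₀, hw₁, hw₂, hw₃⟩ := hwB
  refine color_eq_of_forall_ne_mem_cross (s := Set.Ioc B.x0 p.1) (t := Set.Ico p.2 B.y1) hP
    hpS hw ⟨⟨by linarith [B.hx], le_rfl⟩, le_rfl, by linarith [B.hy]⟩
    ⟨⟨hw₀, by linarith⟩, by linarith, hw₃⟩ fun z hz ⟨⟨hz₀, hz₁⟩, hz₂, hz₃⟩ hzp => ?_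
  by_contra hzB
  refine hzp (hmin z ⟨hz, ?_, ?_⟩ ⟨hz₁, hz₂⟩)
  · exact lt_of_not_ge fun h => hzB (Or.inl ⟨hz₀.le, h⟩)
  · exact lt_of_not_ge fun h => hzB (Or.inr ⟨h, hz₃.le⟩)

lemma color_eq_of_mem_swMinSet {p : Pt} (hp : p ∈ swMinSet (↑S ∩ B.SW)) :
    color p = color w := by
  obtain ⟨⟨hpS, hpx, hpy⟩, hmin⟩ := hp
  obtain ⟨hw₀, hw₁, hw₂, hw₃⟩ := hwB
  refine color_eq_of_forall_ne_mem_cross (s := Set.Ico p.1 B.x1) (t := Set.Ico p.2 B.y1) hP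
    hpS hw ⟨⟨le_rfl, by linarith [B.hx]⟩, le_rfl, by linarith [B.hy]⟩
    ⟨⟨by linarith, hw₁⟩, by linarith, hw₃⟩ fun z hz ⟨⟨hz₀, hz₁⟩, hz₂, hz₃⟩ hzp => ?_
  by_contra hzB
  refine hzp (hmin z ⟨hz, ?_, ?_⟩ ⟨hz₀, hz₂⟩)
  · exact lt_of_not_ge fun h => hzB (Or.inl ⟨h, hz₁.le⟩)
  · exact lt_of_not_ge fun h => hzB (Or.inr ⟨h, hz₃.le⟩)

lemma isSafe_of_inside : isSafe ↑S color B := by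
  have hsafe : safeFor ↑S color (color w) B :=
    ⟨fun p hp hpB => color_eq_of_mem_cross hP hw hwB hp hpB,
      fun _ hp => color_eq_of_mem_neMinSet hP hw hwB hp,
      fun _ hp => color_eq_of_mem_nwMinSet hP hw hwB hp,
      fun _ hp => color_eq_of_mem_seMinSet hP hw hwB hp,
      fun _ hp => color_eq_of_mem_swMinSet hP hw hwB hp⟩
  cases hc : color w
  · exact Or.inr (hc ▸ hsafe)
  · exact Or.inl (hc ▸ hsafe)

end SafeBox

section Slab

variable {α : Type*}

def rankBelow (P : Finset α) (f : α → ℝ) (a : α) : ℕ := #(P.filter fun r => f r < f a)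

lemma rankBelow_lt_rankBelow {P : Finset α} {f : α → ℝ} {a b r : α} (hr : r ∈ P)
    (har : f a < f r) (hrb : f r < f b) : rankBelow P f a < rankBelow P f b := by
  refine card_lt_card ((ssubset_iff_of_subset ?_).mpr ⟨r, mem_filter.mpr ⟨hr, hrb⟩, ?_⟩)
  · exact monotone_filter_right P fun t _ ht => ht.trans (har.trans hrb)
  · exact fun h => (mem_filter.mp h).2.not_gt har

lemma exists_isolating_interval [DecidableEq α] {S P Q : Finset α} {f : α → ℝ} (hf : Set.InjOn f ↑S)
    (hPS : P ⊆ S) (hQ : Q ⊆ S \ P) (hQne : Q.Nonempty)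
    (hrank : ∀ a ∈ Q, ∀ b ∈ Q, rankBelow P f a = rankBelow P f b) :
    ∃ x₀ x₁, x₀ < x₁ ∧ (∀ q ∈ Q, x₀ < f q ∧ f q < x₁) ∧ (∀ g ∈ S, f g ≠ x₀ ∧ f g ≠ x₁) ∧
      ∀ r ∈ P, ¬(x₀ ≤ f r ∧ f r ≤ x₁) := by
  obtain ⟨a, ha, hamin⟩ := Q.exists_min_image f hQne
  obtain ⟨b, hb, hbmax⟩ := Q.exists_max_image f hQne
  obtain ⟨x₀, hlo₀, hhi₀⟩ := Order.exists_between_finsets ((S.image f).filter (· < f a)) {f a}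
    fun x hx y hy => (mem_singleton.mp hy).symm ▸ (mem_filter.mp hx).2
  obtain ⟨x₁, hlo₁, hhi₁⟩ := Order.exists_between_finsets {f b} ((S.image f).filter (f b < ·))
    fun x hx y hy => (mem_singleton.mp hx).symm ▸ (mem_filter.mp hy).2
  have hx₀ : x₀ < f a := hhi₀ _ (mem_singleton_self _)
  have hx₁ : f b < x₁ := hlo₁ _ (mem_singleton_self _)
  have hab : f a ≤ f b := hamin b hb
  have hbetween : ∀ g ∈ S, x₀ ≤ f g → f g ≤ x₁ → f a ≤ f g ∧ f g ≤ f b := fun g hg h₀ h₁ =>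
    ⟨le_of_not_gt fun h => (hlo₀ _ (mem_filter.mpr ⟨mem_image_of_mem f hg, h⟩)).not_ge h₀,
      le_of_not_gt fun h => (hhi₁ _ (mem_filter.mpr ⟨mem_image_of_mem f hg, h⟩)).not_ge h₁⟩
  obtain ⟨haS, haP⟩ := mem_sdiff.mp (hQ ha)
  obtain ⟨hbS, hbP⟩ := mem_sdiff.mp (hQ hb)
  refine ⟨x₀, x₁, by linarith, fun q hq => ⟨hx₀.trans_le (hamin q hq),
    (hbmax q hq).trans_lt hx₁⟩, fun g hg => ⟨fun h => ?_, fun h => ?_⟩, fun r hr ⟨h₀, h₁⟩ => ?_⟩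
  · linarith [(hbetween g hg h.ge (by linarith)).1]
  · linarith [(hbetween g hg (by linarith) h.le).2]
  obtain ⟨hra, hrb⟩ := hbetween r (hPS hr) h₀ h₁
  have hra : f a < f r := hra.lt_of_ne fun h => haP (by rwa [hf haS (hPS hr) h])
  have hrb : f r < f b := hrb.lt_of_ne fun h => hbP (by rwa [← hf (hPS hr) hbS h])
  exact (rankBelow_lt_rankBelow hr hra hrb).ne (hrank a ha b hb)

end Slab

lemma injOn_fst_of_genPos {S : Set Pt} (hgen : genPos S) : Set.InjOn Prod.fst S :=
  fun p hp q hq h => by_contra fun hne => (hgen p hp q hq hne).1 h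

lemma injOn_snd_of_genPos {S : Set Pt} (hgen : genPos S) : Set.InjOn Prod.snd S :=
  fun p hp q hq h => by_contra fun hne => (hgen p hp q hq hne).2 h

def participants (S : Finset Pt) (color : Pt → Bool) : Finset Pt :=
  S.filter fun p => participates ↑S color p

/-- The cell containing `p` of the grid cut out by the lines through the points of `P`. -/
def gridCell (P : Finset Pt) (p : Pt) : ℕ × ℕ := (rankBelow P Prod.fst p, rankBelow P Prod.snd p)

lemma exists_safe_box_of_cell {S Q : Finset Pt} {color : Pt → Bool} (hgen : genPos ↑S)
    (hQ : Q ⊆ S \ participants S color) (hQne : Q.Nonempty)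
    (hcell : ∀ a ∈ Q, ∀ b ∈ Q,
      gridCell (participants S color) a = gridCell (participants S color) b) :
    ∃ B : Box, (∀ q ∈ S, B.offBoundary q) ∧ isSafe ↑S color B ∧ ∀ q ∈ Q, B.inside q := by
  have hPS : participants S color ⊆ S := filter_subset _ _
  obtain ⟨x₀, x₁, hx, hQx, hSx, hPx⟩ := exists_isolating_interval (injOn_fst_of_genPos hgen)
    hPS hQ hQne fun a ha b hb => congrArg Prod.fst (hcell a ha b hb)
  obtain ⟨y₀, y₁, hy, hQy, hSy, hPy⟩ := exists_isolating_interval (injOn_snd_of_genPos hgen)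
    hPS hQ hQne fun a ha b hb => congrArg Prod.snd (hcell a ha b hb)
  let B : Box := ⟨x₀, x₁, y₀, y₁, hx, hy⟩
  have hinside : ∀ q ∈ Q, B.inside q := fun q hq =>
    ⟨(hQx q hq).1, (hQx q hq).2, (hQy q hq).1, (hQy q hq).2⟩
  have hcross : ∀ r ∈ S, participates ↑S color r → r ∉ B.cross := fun r hr hpart hrB => by
    have hrP : r ∈ participants S color := mem_filter.mpr ⟨hr, hpart⟩
    exact hrB.elim (hPx r hrP) (hPy r hrP)
  obtain ⟨w, hw⟩ := hQne
  exact ⟨B, fun q hq => ⟨(hSx q hq).1, (hSx q hq).2, (hSy q hq).1, (hSy q hq).2⟩,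
    isSafe_of_inside hcross (mem_sdiff.mp (hQ hw)).1 (hinside w hw), hinside⟩

section Fibers

variable {β : Type*} [DecidableEq β]

def fibers (S : Finset Pt) (key : Pt → β) : Finset (Finset Pt) :=
  (S.image key).image fun k => S.filter (key · = k)

lemma mem_fibers {S : Finset Pt} {key : Pt → β} {C : Finset Pt} :
    C ∈ fibers S key ↔ ∃ p ∈ S, S.filter (key · = key p) = C := by
  simp only [fibers, mem_image, exists_exists_and_eq_and]

lemma isPartition_fibers (S : Finset Pt) (key : Pt → β) : isPartition S (fibers S key) := by
  refine ⟨fun C hC => ?_, fun p hp => ⟨S.filter (key · = key p), ⟨mem_fibers.mpr ⟨p, hp, rfl⟩,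
    mem_filter.mpr ⟨hp, rfl⟩⟩, fun C ⟨hC, hpC⟩ => ?_⟩⟩
  · obtain ⟨q, hq, rfl⟩ := mem_fibers.mp hC
    exact ⟨filter_subset _ _, q, mem_filter.mpr ⟨hq, rfl⟩⟩
  · obtain ⟨q, -, rfl⟩ := mem_fibers.mp hC
    rw [(mem_filter.mp hpC).2]

lemma card_fibers_le (S : Finset Pt) (key : Pt → β) : #(fibers S key) ≤ #(S.image key) :=
  card_image_le

end Fibers

def cellKey (S : Finset Pt) (color : Pt → Bool) (p : Pt) : Pt ⊕ ℕ × ℕ :=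
  if p ∈ participants S color then .inl p else .inr (gridCell (participants S color) p)

lemma respectful_fibers_cellKey {S : Finset Pt} {color : Pt → Bool} (hgen : genPos ↑S) :
    respectful S color (fibers S (cellKey S color)) := by
  intro C hC
  obtain ⟨p, hp, rfl⟩ := mem_fibers.mp hC
  by_cases hpP : p ∈ participants S color
  · refine Or.inl (card_eq_one.mpr ⟨p, ext fun q => ?_⟩)
    simp only [mem_filter, mem_singleton, cellKey, hpP, if_true]
    constructor
    · rintro ⟨-, hq⟩
      split_ifs at hq
      exact Sum.inl_injective hq
    · rintro rfl
      exact ⟨hp, if_pos hpP⟩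
  · have hkey : ∀ q ∈ S.filter (cellKey S color · = cellKey S color p),
        q ∉ participants S color ∧
          gridCell (participants S color) q = gridCell (participants S color) p := by
      intro q hq
      have hqkey := (mem_filter.mp hq).2
      simp only [cellKey, hpP, if_false] at hqkey
      split_ifs at hqkey with hqP
      exact ⟨hqP, Sum.inr_injective hqkey⟩
    refine Or.inr (exists_safe_box_of_cell hgen (fun q hq => ?_) ⟨p, mem_filter.mpr ⟨hp, rfl⟩⟩
      fun a ha b hb => ?_)
    · exact mem_sdiff.mpr ⟨(mem_filter.mp hq).1, (hkey q hq).1⟩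
    · exact (hkey a ha).2.trans (hkey b hb).2.symm

lemma card_image_cellKey_le (S : Finset Pt) (color : Pt → Bool) :
    #(S.image (cellKey S color)) ≤
      #(participants S color) + (#(participants S color) + 1) * (#(participants S color) + 1) := by
  set P := participants S color
  have hsub : S.image (cellKey S color) ⊆ P.disjSum (range (#P + 1) ×ˢ range (#P + 1)) := by
    intro k hk
    obtain ⟨p, -, rfl⟩ := mem_image.mp hk
    unfold cellKey
    split_ifs with hpP
    · exact inl_mem_disjSum.mpr hpP
    · exact inr_mem_disjSum.mpr (mem_product.mpr ⟨mem_range.mpr (Nat.lt_succ_of_le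
        (card_filter_le _ _)), mem_range.mpr (Nat.lt_succ_of_le (card_filter_le _ _))⟩)
  simpa only [card_disjSum, card_product, card_range] using card_le_card hsub

section Entropy

variable {S : Finset Pt} {Prt : Finset (Finset Pt)}

lemma sum_card_eq_of_isPartition (hPrt : isPartition S Prt) : ∑ C ∈ Prt, #C = #S := by
  calc ∑ C ∈ Prt, #C = ∑ C ∈ Prt, ∑ p ∈ S, if p ∈ C then 1 else 0 := by
        refine sum_congr rfl fun C hC => ?_
        rw [sum_boole, Nat.cast_id, filter_mem_eq_inter, inter_eq_right.mpr (hPrt.1 C hC).1]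
    _ = ∑ p ∈ S, #(Prt.filter (p ∈ ·)) := by
        rw [sum_comm]
        simp only [sum_boole, Nat.cast_id]
    _ = #S := by
        rw [card_eq_sum_ones]
        refine sum_congr rfl fun p hp => card_eq_one.mpr ?_
        obtain ⟨C, hC, huniq⟩ := hPrt.2 p hp
        exact ⟨C, ext fun D => by
          rw [mem_filter, mem_singleton]
          exact ⟨huniq D, fun h => h ▸ hC⟩⟩

lemma partitionEntropy_nonneg (hPrt : isPartition S Prt) : 0 ≤ partitionEntropy #S Prt := by
  refine sum_nonneg fun C hC => mul_nonneg (by positivity) (Real.logb_nonneg one_lt_two ?_)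
  have hCpos : (0 : ℝ) < #C := by exact_mod_cast (hPrt.1 C hC).2.card_pos
  exact (one_le_div hCpos).mpr (by exact_mod_cast card_le_card (hPrt.1 C hC).1)

lemma partitionEntropy_le_logb_card (hPrt : isPartition S Prt) (hS : S.Nonempty) :
    partitionEntropy #S Prt ≤ Real.logb 2 #Prt := by
  have hn : (0 : ℝ) < #S := by exact_mod_cast hS.card_pos
  have hC : ∀ C ∈ Prt, (0 : ℝ) < #C := fun C hC => by exact_mod_cast (hPrt.1 C hC).2.card_pos
  have hconc : ConcaveOn ℝ (Set.Ioi 0) (Real.logb 2) := by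
    have hlogb : Real.logb 2 = fun x => (Real.log 2)⁻¹ • Real.log x :=
      funext fun x => by rw [Real.logb, smul_eq_mul, div_eq_inv_mul]
    exact hlogb ▸
      strictConcaveOn_log_Ioi.concaveOn.smul (inv_nonneg.mpr (Real.log_nonneg one_le_two))
  have hw : ∑ C ∈ Prt, (#C : ℝ) / #S = 1 := by
    rw [← sum_div, ← Nat.cast_sum, sum_card_eq_of_isPartition hPrt, div_self hn.ne']
  have hjensen := hconc.le_map_sum (fun C _ => by positivity) hw
    fun C hCmem => Set.mem_Ioi.mpr (div_pos hn (hC C hCmem))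
  have hsum : ∑ C ∈ Prt, ((#C : ℝ) / #S) • ((#S : ℝ) / #C) = ∑ C ∈ Prt, 1 :=
    sum_congr rfl fun C hCmem => by
      rw [smul_eq_mul, div_mul_div_comm, mul_comm, div_self (mul_pos hn (hC C hCmem)).ne']
  rw [hsum, sum_const, nsmul_one] at hjensen
  simpa only [partitionEntropy, smul_eq_mul] using hjensen

lemma structEntropy_le {color : Pt → Bool} (hPrt : isPartition S Prt)
    (hresp : respectful S color Prt) : structEntropy S color ≤ partitionEntropy #S Prt :=
  csInf_le ⟨0, fun _ ⟨_, hPrt', _, hx⟩ => hx ▸ partitionEntropy_nonneg hPrt'⟩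
    ⟨Prt, hPrt, hresp, rfl⟩

end Entropy

lemma logb_card_fibers_cellKey_le {S : Finset Pt} {color : Pt → Bool}
    (hh : 2 ≤ #(participants S color)) :
    Real.logb 2 #(fibers S (cellKey S color)) ≤ 4 * Real.logb 2 #(participants S color) := by
  set h := #(participants S color)
  have hS : S.Nonempty := card_pos.mp (two_pos.trans_le (hh.trans (card_filter_le _ _)))
  have hpos : (0 : ℝ) < #(fibers S (cellKey S color)) := by
    exact_mod_cast card_pos.mpr ((hS.image _).image _)
  have hh' : (2 : ℝ) ≤ h := by exact_mod_cast hh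
  have hcard : (#(fibers S (cellKey S color)) : ℝ) ≤ h + (h + 1) * (h + 1) := by
    exact_mod_cast (card_fibers_le _ _).trans (card_image_cellKey_le S color)
  calc Real.logb 2 #(fibers S (cellKey S color)) ≤ Real.logb 2 ((h : ℝ) ^ 4) :=
        Real.logb_le_logb_of_le one_lt_two hpos
          (by nlinarith [mul_le_mul hh' hh' zero_le_two h.cast_nonneg])
    _ = 4 * Real.logb 2 h := by rw [Real.logb_pow]; norm_num

end StructuralEntropy

open StructuralEntropy

theorem stmt10 : ∃ C : ℝ, 0 < C ∧
    ∀ (S : Finset Pt) (color : Pt → Bool), genPos (↑S : Set Pt) →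
      2 ≤ (S.filter (fun p => participates (↑S : Set Pt) color p)).card →
      (S.card : ℝ) * (structEntropy S color + 1) ≤
        C * (S.card : ℝ) *
          Real.logb 2 ((S.filter (fun p => participates (↑S : Set Pt) color p)).card : ℝ) := by
  refine ⟨5, by norm_num, fun S color hgen hh => ?_⟩
  change 2 ≤ #(participants S color) at hh
  change _ ≤ _ * Real.logb 2 #(participants S color)
  have hS : S.Nonempty := card_pos.mp (two_pos.trans_le (hh.trans (card_filter_le _ _)))
  have hPrt := isPartition_fibers S (cellKey S color)
  have hent : structEntropy S color ≤ 4 * Real.logb 2 #(participants S color) :=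
    ((structEntropy_le hPrt (respectful_fibers_cellKey hgen)).trans
      (partitionEntropy_le_logb_card hPrt hS)).trans (logb_card_fibers_cellKey_le hh)
  have hlog : 1 ≤ Real.logb 2 #(participants S color) := by
    rw [← Real.logb_self_eq_one one_lt_two]
    exact Real.logb_le_logb_of_le one_lt_two two_pos (by exact_mod_cast hh)
  calc (#S : ℝ) * (structEntropy S color + 1)
      ≤ #S * (5 * Real.logb 2 #(participants S color)) := by gcongr; linarith
    _ = 5 * #S * Real.logb 2 #(participants S color) := by ring
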